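/- Let X̃_1 be the first generation space with τ_n = n and F(n,i) = 2^i. Then the centered maximal operator M^c is not of strong type (1,1): for f_n = δ_{x_n} one has ‖M^c f_n‖_1 ≥ (n/2) ‖f_n‖_1. -/

import Mathlib

open scoped ENNReal Classical
open Filter Set

/-- The point set of a first generation space: roots `x_n` (`Sum.inl n`) and
leaves `x_{n,i}` (`Sum.inr ⟨n, i⟩`, `i` among `τ n` leaves of branch `n`). -/
abbrev XPt (τ : ℕ → ℕ) := ℕ ⊕ (Σ n : ℕ, Fin (τ n))

namespace FirstGen

/-- The root `x_n`. -/
def root (τ : ℕ → ℕ) (n : ℕ) : XPt τ := Sum.inl n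

/-- The leaf `x_{n,i}`. -/
def leaf (τ : ℕ → ℕ) (n : ℕ) (i : Fin (τ n)) : XPt τ := Sum.inr ⟨n, i⟩

/-- The branch `S_n = {x_n, x_{n,1}, …, x_{n,τ_n}}`. -/
def branch (τ : ℕ → ℕ) (n : ℕ) : Set (XPt τ) :=
  {x | x = root τ n ∨ ∃ i, x = leaf τ n i}

/-- The two-point set `{x_n, x_{n,i}}`. -/
def pairB (τ : ℕ → ℕ) (n : ℕ) (i : Fin (τ n)) : Set (XPt τ) :=
  {root τ n, leaf τ n i}

/-- The collection of all open balls of `X_τ`: singletons, pairs `{x_n, x_{n,i}}`,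
branches `S_n` and the whole space. -/
def balls (τ : ℕ → ℕ) : Set (Set (XPt τ)) :=
  {B | (∃ x, B = {x}) ∨ (∃ n i, B = pairB τ n i) ∨ (∃ n, B = branch τ n) ∨ B = Set.univ}

/-- The ball `B(x, 3/2)` centered at `x`. -/
def cball (τ : ℕ → ℕ) : XPt τ → Set (XPt τ)
  | Sum.inl n => branch τ n
  | Sum.inr ⟨n, i⟩ => pairB τ n i

/-- The weight (measure of the singleton): `μ({x_n}) = d n`,
`μ({x_{n,i}}) = d n * F n i`. -/
noncomputable def weight (τ : ℕ → ℕ) (d : ℕ → ℝ≥0∞)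
    (F : (n : ℕ) → Fin (τ n) → ℝ≥0∞) : XPt τ → ℝ≥0∞
  | Sum.inl n => d n
  | Sum.inr ⟨n, i⟩ => d n * F n i

/-- Measure of a set. -/
noncomputable def mass {τ : ℕ → ℕ} (w : XPt τ → ℝ≥0∞) (s : Set (XPt τ)) : ℝ≥0∞ :=
  ∑' x : s, w x.1

/-- Average `A_s(f)` of `f` over `s`. -/
noncomputable def avg {τ : ℕ → ℕ} (w f : XPt τ → ℝ≥0∞) (s : Set (XPt τ)) : ℝ≥0∞ :=
  (∑' x : s, f x.1 * w x.1) / mass w s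

/-- The centered Hardy–Littlewood maximal operator of `X_τ` (the three balls
centered at `x` are `{x}`, `cball τ x` and the whole space). -/
noncomputable def Mc {τ : ℕ → ℕ} (w f : XPt τ → ℝ≥0∞) (x : XPt τ) : ℝ≥0∞ :=
  avg w f {x} ⊔ avg w f (cball τ x) ⊔ avg w f Set.univ

/-- The non-centered Hardy–Littlewood maximal operator of `X_τ`. -/
noncomputable def Mnc {τ : ℕ → ℕ} (w f : XPt τ → ℝ≥0∞) (x : XPt τ) : ℝ≥0∞ :=
  ⨆ (B : Set (XPt τ)) (_ : B ∈ balls τ) (_ : x ∈ B), avg w f B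

/-- `‖f‖_p^p = ∑_x f(x)^p μ({x})`. -/
noncomputable def lpp {τ : ℕ → ℕ} (w : XPt τ → ℝ≥0∞) (p : ℝ) (f : XPt τ → ℝ≥0∞) : ℝ≥0∞ :=
  ∑' x, f x ^ p * w x

/-- `T` is of strong type `(p,p)` (stated on the level of `p`-th powers). -/
def strongT {τ : ℕ → ℕ} (w : XPt τ → ℝ≥0∞)
    (T : (XPt τ → ℝ≥0∞) → XPt τ → ℝ≥0∞) (p : ℝ) : Prop :=
  ∃ C : ℝ≥0∞, C ≠ ∞ ∧ ∀ f, lpp w p (T f) ≤ C * lpp w p f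

/-- `T` is of weak type `(p,p)` (stated on the level of `p`-th powers). -/
def weakT {τ : ℕ → ℕ} (w : XPt τ → ℝ≥0∞)
    (T : (XPt τ → ℝ≥0∞) → XPt τ → ℝ≥0∞) (p : ℝ) : Prop :=
  ∃ C : ℝ≥0∞, C ≠ ∞ ∧ ∀ f (l : ℝ≥0∞), l ^ p * mass w {x | l < T f x} ≤ C * lpp w p f

/-- `‖g‖_{p,∞}^p`. -/
noncomputable def wnormP {τ : ℕ → ℕ} (w : XPt τ → ℝ≥0∞) (p : ℝ) (g : XPt τ → ℝ≥0∞) : ℝ≥0∞ :=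
  ⨆ l : ℝ≥0∞, l ^ p * mass w {x | l < g x}

/-- The Dirac function `δ_{x_n}`. -/
noncomputable def dirac (τ : ℕ → ℕ) (n : ℕ) : XPt τ → ℝ≥0∞ :=
  fun x => if x = root τ n then 1 else 0

end FirstGen

open FirstGen

/-!
At a leaf `x_{n,i}` the centered maximal function of `δ_{x_n}` is at least its average over the
ball `{x_n, x_{n,i}}`, namely `μ(x_n) / (μ(x_n) + μ(x_{n,i}))`. As the leaf is at least as heavy
as the root, this leaf contributes at least `μ(x_n) / 2` to `‖M^c δ_{x_n}‖₁`, so the `n + 1`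
leaves of branch `n` give `‖M^c δ_{x_n}‖₁ ≥ (n + 1) / 2 · ‖δ_{x_n}‖₁`, and no constant can
bound the ratio.
-/

lemma ENNReal.half_le_div_add_mul {a b : ℝ≥0∞} (hab : a ≤ b) (hb : b ≠ ∞) :
    a / 2 ≤ a / (a + b) * b := by
  rcases eq_or_ne a 0 with rfl | ha
  · simp
  have hb0 : b ≠ 0 := (pos_of_ne_zero ha |>.trans_le hab).ne'
  calc a / 2 = a / (2 * b) * b := by
        rw [div_eq_mul_inv, div_eq_mul_inv, ENNReal.mul_inv (by simp) (by simp), mul_assoc,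
          mul_assoc, ENNReal.inv_mul_cancel hb0 hb, mul_one]
    _ ≤ a / (a + b) * b := by
        gcongr
        rw [two_mul]
        gcongr

lemma ENNReal.exists_lt_nat_succ_div_two {C : ℝ≥0∞} (hC : C ≠ ∞) :
    ∃ n : ℕ, C < ((n : ℝ≥0∞) + 1) / 2 := by
  obtain ⟨n, hn⟩ := ENNReal.exists_nat_gt (ENNReal.mul_ne_top (by simp) hC : 2 * C ≠ ∞)
  refine ⟨n, (ENNReal.lt_div_iff_mul_lt (by simp) (by simp)).mpr ?_⟩
  rw [mul_comm]
  exact hn.trans_le le_self_add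

namespace FirstGen

variable {τ : ℕ → ℕ} (w : XPt τ → ℝ≥0∞)

lemma lpp_one (g : XPt τ → ℝ≥0∞) : lpp w 1 g = ∑' x, g x * w x := by
  simp only [lpp, ENNReal.rpow_one]

lemma lpp_one_dirac (n : ℕ) : lpp w 1 (dirac τ n) = w (root τ n) := by
  rw [lpp_one, ← tsum_ite_eq (root τ n) w]
  refine tsum_congr fun x => ?_
  by_cases hx : x = root τ n <;> simp [dirac, hx]

lemma tsum_pairB (g : XPt τ → ℝ≥0∞) (n : ℕ) (i : Fin (τ n)) :
    ∑' x : pairB τ n i, g x.1 = g (root τ n) + g (leaf τ n i) := by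
  have hfin : pairB τ n i = (({root τ n, leaf τ n i} : Finset (XPt τ)) : Set (XPt τ)) := by
    simp [pairB]
  rw [hfin, Finset.tsum_subtype', Finset.sum_insert (by simp [root, leaf]),
    Finset.sum_singleton]

lemma avg_dirac_pairB (n : ℕ) (i : Fin (τ n)) :
    avg w (dirac τ n) (pairB τ n i) = w (root τ n) / (w (root τ n) + w (leaf τ n i)) := by
  rw [avg, mass, tsum_pairB, tsum_pairB (fun x => dirac τ n x * w x)]
  simp [dirac, root, leaf]

lemma avg_pairB_le_Mc_leaf (f : XPt τ → ℝ≥0∞) (n : ℕ) (i : Fin (τ n)) :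
    avg w f (pairB τ n i) ≤ Mc w f (leaf τ n i) :=
  le_sup_of_le_left (le_sup_right (a := avg w f {leaf τ n i}))

lemma tsum_leaf_le_lpp_one (g : XPt τ → ℝ≥0∞) (n : ℕ) :
    ∑' i : Fin (τ n), g (leaf τ n i) * w (leaf τ n i) ≤ lpp w 1 g := by
  rw [lpp_one]
  exact ENNReal.tsum_comp_le_tsum_of_injective (fun i j h => by simpa [leaf] using h)
    (fun x => g x * w x)

lemma lpp_one_Mc_dirac_ge (n : ℕ) (hw : ∀ i, w (root τ n) ≤ w (leaf τ n i))
    (hw_top : ∀ i, w (leaf τ n i) ≠ ∞) :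
    (τ n : ℝ≥0∞) / 2 * lpp w 1 (dirac τ n) ≤ lpp w 1 (Mc w (dirac τ n)) := by
  have hleaf (i : Fin (τ n)) :
      w (root τ n) / 2 ≤ Mc w (dirac τ n) (leaf τ n i) * w (leaf τ n i) :=
    calc w (root τ n) / 2
        ≤ w (root τ n) / (w (root τ n) + w (leaf τ n i)) * w (leaf τ n i) :=
          ENNReal.half_le_div_add_mul (hw i) (hw_top i)
      _ ≤ Mc w (dirac τ n) (leaf τ n i) * w (leaf τ n i) := by
          rw [← avg_dirac_pairB]
          gcongr
          exact avg_pairB_le_Mc_leaf w _ n i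
  calc (τ n : ℝ≥0∞) / 2 * lpp w 1 (dirac τ n)
      = ∑' _i : Fin (τ n), w (root τ n) / 2 := by
        rw [lpp_one_dirac, tsum_fintype, Finset.sum_const, Finset.card_univ, Fintype.card_fin,
          nsmul_eq_mul]
        simp only [div_eq_mul_inv]
        ring
    _ ≤ ∑' i : Fin (τ n), Mc w (dirac τ n) (leaf τ n i) * w (leaf τ n i) :=
        ENNReal.tsum_le_tsum hleaf
    _ ≤ lpp w 1 (Mc w (dirac τ n)) := tsum_leaf_le_lpp_one w _ n

lemma not_strongT_of_unbounded_ratio (T : (XPt τ → ℝ≥0∞) → XPt τ → ℝ≥0∞) (p : ℝ)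
    {f : ℕ → XPt τ → ℝ≥0∞} {c : ℕ → ℝ≥0∞} (hc : ∀ n, c n * lpp w p (f n) ≤ lpp w p (T (f n)))
    (hf_zero : ∀ n, lpp w p (f n) ≠ 0) (hf_top : ∀ n, lpp w p (f n) ≠ ∞)
    (hc_unbounded : ∀ C ≠ ∞, ∃ n, C < c n) :
    ¬ strongT w T p := by
  rintro ⟨C, hC, hT⟩
  obtain ⟨n, hn⟩ := hc_unbounded C hC
  have : c n * lpp w p (f n) ≤ C * lpp w p (f n) := (hc n).trans (hT (f n))
  exact (ENNReal.mul_le_mul_iff_left (hf_zero n) (hf_top n) |>.mp this).not_gt hn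

end FirstGen

/-- Branch `n` here is the paper's branch `n + 1`: it has `τ n = n + 1` leaves of weights
`2^{i+1} d n`, `i = 0, …, n`. -/
theorem Xtilde1_cen_not_strong_general (τ : ℕ → ℕ) (hτ : ∀ n : ℕ, τ n = n + 1)
    (d : ℕ → ℝ≥0∞) (hd : ∀ n, 0 < d n ∧ d n ≠ ∞)
    (F : (n : ℕ) → Fin (τ n) → ℝ≥0∞) (hF : ∀ n i, F n i = 2 ^ ((i : ℕ) + 1)) :
    (∀ n : ℕ, (((n : ℝ≥0∞) + 1) / 2) * lpp (weight τ d F) 1 (dirac τ n)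
      ≤ lpp (weight τ d F) 1 (Mc (weight τ d F) (dirac τ n))) ∧
    ¬ strongT (weight τ d F) (Mc (weight τ d F)) 1 := by
  have hroot (n : ℕ) : lpp (weight τ d F) 1 (dirac τ n) = d n := lpp_one_dirac _ n
  have hbound (n : ℕ) : (((n : ℝ≥0∞) + 1) / 2) * lpp (weight τ d F) 1 (dirac τ n)
      ≤ lpp (weight τ d F) 1 (Mc (weight τ d F) (dirac τ n)) := by
    have hleaf (i : Fin (τ n)) : weight τ d F (leaf τ n i) = d n * 2 ^ ((i : ℕ) + 1) := by
      simp [weight, leaf, hF]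
    have := lpp_one_Mc_dirac_ge (weight τ d F) n
      (fun i => by rw [hleaf]; exact le_mul_of_one_le_right' (one_le_pow₀ one_le_two))
      (fun i => by rw [hleaf]; exact ENNReal.mul_ne_top (hd n).2 (by simp))
    simpa [hτ] using this
  refine ⟨hbound, not_strongT_of_unbounded_ratio _ _ _ hbound (fun n => ?_) (fun n => ?_)
    fun C hC => ENNReal.exists_lt_nat_succ_div_two hC⟩
  · exact hroot n ▸ (hd n).1.ne'
  · exact hroot n ▸ (hd n).2

/-- in the first generation space `X̃₁` (branch `n` here is the
paper's branch `n+1`, with `τ n = n+1` leaves of weights `2^{i+1} d n`,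
`i = 0, …, n`, masses of branches halving and `d 0 = 1`), the centered maximal
operator is not of strong type `(1,1)`: for `f_n = δ_{x_n}` one has
`‖M^c f_n‖₁ ≥ ((n+1)/2) ‖f_n‖₁`. -/
theorem Xtilde1_cen_not_strong (τ : ℕ → ℕ) (hτ : ∀ n : ℕ, τ n = n + 1)
    (d : ℕ → ℝ≥0∞) (hd : ∀ n, 0 < d n ∧ d n ≠ ∞) (hd1 : d 0 = 1)
    (F : (n : ℕ) → Fin (τ n) → ℝ≥0∞) (hF : ∀ n i, F n i = 2 ^ ((i : ℕ) + 1))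
    (hhalf : ∀ n, mass (weight τ d F) (branch τ (n + 1))
      = mass (weight τ d F) (branch τ n) / 2) :
    (∀ n : ℕ, (((n : ℝ≥0∞) + 1) / 2) * lpp (weight τ d F) 1 (dirac τ n)
      ≤ lpp (weight τ d F) 1 (Mc (weight τ d F) (dirac τ n))) ∧
    ¬ strongT (weight τ d F) (Mc (weight τ d F)) 1 :=
  Xtilde1_cen_not_strong_general τ hτ d hd F hF
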